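/- arXiv:1308.4283 — 4 statements merged into one kernel-verified Lean document; each statement's English description precedes it below -/
import Mathlib

section
/- No-Homomorphism Lemma: if H is a vertex-transitive finite simple graph and there exists a graph homomorphism from G to H, then |V(G)|/α(G) ≤ |V(H)|/α(H). -/
/-!
Let `S` be a maximum independent set of `H` and `f : G →g H`. For every automorphism `π` of `H`,
`π ∘ f` is again a homomorphism, so the preimage `{v | π (f v) ∈ S}` is independent in `G` and has
at most `α(G)` elements. Summing over the automorphism group `Γ` gives at most `|Γ| α(G)`. Counting
the other way, vertex-transitivity makes `#{π | π u ∈ S} = |S| |Γ| / |W|` for every vertex `u`, so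
the same sum is `|V| α(H) |Γ| / |W|`.
-/

/-- The independence number of a simple graph: the clique number of the complement. -/
noncomputable def SimpleGraph.indepNum' {V : Type*} (G : SimpleGraph V) : ℕ := Gᶜ.cliqueNum

open Finset MulAction

namespace MulAction

variable {Γ X : Type*} [Group Γ] [MulAction Γ X] [IsPretransitive Γ X] [Fintype Γ]
  [DecidableEq X]

theorem card_filter_smul_eq_eq_card_filter_smul_eq (a b b' : X) :
    #{g : Γ | g • a = b} = #{g : Γ | g • a = b'} := by
  obtain ⟨τ, rfl⟩ := exists_smul_eq Γ b b'
  exact card_equiv (Equiv.mulLeft τ) fun g => by simp [mul_smul]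

variable [Fintype X]

theorem card_mul_card_filter_smul_eq (a b : X) :
    Fintype.card X * #{g : Γ | g • a = b} = Fintype.card Γ := by
  calc Fintype.card X * #{g : Γ | g • a = b}
      = ∑ b' : X, #{g : Γ | g • a = b'} := by
        simp [card_filter_smul_eq_eq_card_filter_smul_eq a _ b]
    _ = Fintype.card Γ := by
        rw [sum_card_fiberwise_eq_card_filter]
        simp

theorem card_mul_card_filter_smul_mem (S : Finset X) (a : X) :
    Fintype.card X * #{g : Γ | g • a ∈ S} = #S * Fintype.card Γ := by
  rw [← sum_card_fiberwise_eq_card_filter, mul_sum]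
  simp [card_mul_card_filter_smul_eq]

end MulAction

namespace SimpleGraph

variable {V W : Type*} {G : SimpleGraph V} {H : SimpleGraph W}

theorem IsIndepSet.preimage {S : Set W} (hS : H.IsIndepSet S) (f : G →g H) :
    G.IsIndepSet (f ⁻¹' S) := fun _ hv _ hw _ hadj =>
  hS hv hw (f.map_adj hadj).ne (f.map_adj hadj)

theorem card_preimage_le_indepNum [Fintype V] [DecidableEq W] {S : Finset W}
    (hS : H.IsIndepSet S) (f : G →g H) : #{v | f v ∈ S} ≤ G.indepNum :=
  IsIndepSet.card_le_indepNum (by convert hS.preimage f; ext; simp)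

instance [Finite W] : Finite (H ≃g H) :=
  Finite.of_injective _ DFunLike.coe_injective

theorem card_mul_indepNum_le_of_isPretransitive [Fintype V] [Fintype W]
    [IsPretransitive (H ≃g H) W] (f : G →g H) :
    Fintype.card V * H.indepNum ≤ Fintype.card W * G.indepNum := by
  classical
  let _ : Fintype (H ≃g H) := Fintype.ofFinite _
  obtain ⟨S, hS⟩ := H.exists_isNIndepSet_indepNum
  set T := ∑ π : H ≃g H, #{v | π • f v ∈ S}
  have hupper : T ≤ Fintype.card (H ≃g H) * G.indepNum := by
    calc T ≤ ∑ _π : H ≃g H, G.indepNum := sum_le_sum fun π _ =>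
          card_preimage_le_indepNum hS.isIndepSet (π.toEmbedding.toHom.comp f)
      _ = Fintype.card (H ≃g H) * G.indepNum := by simp
  have hcount : Fintype.card W * T = Fintype.card V * H.indepNum * Fintype.card (H ≃g H) := by
    have hswap : T = ∑ v : V, #{π : H ≃g H | π • f v ∈ S} :=
      sum_card_bipartiteAbove_eq_sum_card_bipartiteBelow _
    rw [hswap, mul_sum, sum_congr rfl fun v _ => card_mul_card_filter_smul_mem S (f v), sum_const,
      card_univ, hS.card_eq, smul_eq_mul, mul_assoc]
  refine Nat.le_of_mul_le_mul_right ?_ (Fintype.card_pos (α := H ≃g H))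
  calc Fintype.card V * H.indepNum * Fintype.card (H ≃g H)
      = Fintype.card W * T := hcount.symm
    _ ≤ Fintype.card W * (Fintype.card (H ≃g H) * G.indepNum) := Nat.mul_le_mul_left _ hupper
    _ = Fintype.card W * G.indepNum * Fintype.card (H ≃g H) := by ring

end SimpleGraph

/-- No-Homomorphism Lemma. If H is vertex-transitive and G → H, then
|V(G)|/α(G) ≤ |V(H)|/α(H), stated in cross-multiplied form. -/
theorem no_homomorphism_lemma {V W : Type*} [Fintype V] [Fintype W]
    (G : SimpleGraph V) (H : SimpleGraph W)
    (htrans : ∀ u v : W, ∃ π : H ≃g H, π u = v)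
    (hhom : Nonempty (G →g H)) :
    Fintype.card V * H.indepNum' ≤ Fintype.card W * G.indepNum' := by
  have : IsPretransitive (H ≃g H) W := ⟨htrans⟩
  simpa [SimpleGraph.indepNum'] using
    SimpleGraph.card_mul_indepNum_le_of_isPretransitive hhom.some
end

section
/- Alon's linear-algebra bound: let G be a finite graph, 𝔽 a field, and ℱ a finite-dimensional subspace of the polynomial ring 𝔽[x₁,…,x_k]. Suppose each vertex u of G is assigned a pair (f_u, c_u) ∈ ℱ × 𝔽^k such that f_u(c_u) ≠ 0 for all u, and f_u(c_v) = 0 whenever u ≠ v are non-adjacent. Then α(G) ≤ dim(ℱ). -/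
/-!
Evaluation at `c u` is a linear functional on `ℱ`. On an independent set `s` the matrix
`(f u (c w))_{u, w ∈ s}` is diagonal with nonzero diagonal, so the `f u`, `u ∈ s`, are linearly
independent in `ℱ` and `#s ≤ dim ℱ`.
-/

open Module

theorem LinearIndependent.of_pairwise_dual_eq_zero_of_ne_zero {ι R M : Type*} [CommRing R]
    [NoZeroDivisors R] [AddCommGroup M] [Module R M] (v : ι → M) (φ : ι → Dual R M)
    (hne : Pairwise fun i j ↦ φ i (v j) = 0) (hself : ∀ i, φ i (v i) ≠ 0) :
    LinearIndependent R v := by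
  refine linearIndependent_iff'.mpr fun s g hrel i hi ↦ ?_
  have hother (j : ι) (_ : j ∈ s) (hji : j ≠ i) : g j * φ i (v j) = 0 := by simp [hne hji.symm]
  have hφ : g i * φ i (v i) = 0 := by
    simpa [s.sum_eq_single i hother (absurd hi)] using congr_arg (φ i) hrel
  exact (mul_eq_zero.mp hφ).resolve_right (hself i)

namespace SimpleGraph

variable {V K M : Type*} [Field K] [AddCommGroup M] [Module K M] [Module.Finite K M]
  {G : SimpleGraph V} {v : V → M} {φ : V → Dual K M}

theorem IsIndepSet.card_le_finrank_of_dual (hself : ∀ u, φ u (v u) ≠ 0)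
    (hother : ∀ u w, u ≠ w → ¬G.Adj u w → φ w (v u) = 0) {s : Finset V}
    (hs : G.IsIndepSet s) : s.card ≤ finrank K M := by
  have hli : LinearIndependent K fun u : s ↦ v u :=
    .of_pairwise_dual_eq_zero_of_ne_zero _ (fun u : s ↦ φ u)
      (fun w u hwu ↦ hother u w (Subtype.coe_ne_coe.mpr hwu.symm)
        (hs u.2 w.2 (Subtype.coe_ne_coe.mpr hwu.symm)))
      (fun u ↦ hself u)
  simpa using hli.fintype_card_le_finrank

theorem indepNum_le_finrank_of_dual (hself : ∀ u, φ u (v u) ≠ 0)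
    (hother : ∀ u w, u ≠ w → ¬G.Adj u w → φ w (v u) = 0) :
    G.indepNum ≤ finrank K M :=
  csSup_le' fun _ ⟨_, hs⟩ ↦ hs.card_eq ▸ hs.isIndepSet.card_le_finrank_of_dual hself hother

end SimpleGraph

theorem alon_linear_algebra_bound_general {V : Type*} (G : SimpleGraph V)
    {F : Type*} [Field F] (k : ℕ)
    (ℱ : Submodule F (MvPolynomial (Fin k) F)) [FiniteDimensional F ℱ]
    (f : V → MvPolynomial (Fin k) F) (c : V → Fin k → F)
    (hmem : ∀ u, f u ∈ ℱ)
    (hself : ∀ u, MvPolynomial.eval (c u) (f u) ≠ 0)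
    (hother : ∀ u v, u ≠ v → ¬G.Adj u v → MvPolynomial.eval (c v) (f u) = 0) :
    G.indepNum' ≤ Module.finrank F ℱ := by
  let evalAt (u : V) : Dual F ℱ := (MvPolynomial.aeval (c u)).toLinearMap ∘ₗ ℱ.subtype
  rw [SimpleGraph.indepNum', SimpleGraph.cliqueNum_compl]
  exact SimpleGraph.indepNum_le_finrank_of_dual (v := fun u ↦ ⟨f u, hmem u⟩) (φ := evalAt)
    (by simpa [evalAt] using hself) (by simpa [evalAt] using hother)

/-- Alon's linear-algebra bound: a polynomial representation of G
over a subspace ℱ gives α(G) ≤ dim ℱ. -/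
theorem alon_linear_algebra_bound {V : Type*} [Fintype V] (G : SimpleGraph V)
    {F : Type*} [Field F] (k : ℕ)
    (ℱ : Submodule F (MvPolynomial (Fin k) F)) [FiniteDimensional F ℱ]
    (f : V → MvPolynomial (Fin k) F) (c : V → Fin k → F)
    (hmem : ∀ u, f u ∈ ℱ)
    (hself : ∀ u, MvPolynomial.eval (c u) (f u) ≠ 0)
    (hother : ∀ u v, u ≠ v → ¬G.Adj u v → MvPolynomial.eval (c v) (f u) = 0) :
    G.indepNum' ≤ Module.finrank F ℱ :=
  alon_linear_algebra_bound_general G k ℱ f c hmem hself hother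
end

section
/- Barrington–Beigel–Rudich: let p be a prime and k, ℓ integers with k > p^ℓ. Then there exists a multilinear polynomial f ∈ ℤ_p[x₁,…,x_k] of degree at most p^ℓ − 1 such that for every c ∈ {0,1}^k, f(c) ≡ 1 (mod p) if the Hamming weight of c is divisible by p^ℓ, and f(c) ≡ 0 (mod p) otherwise. -/
/-!
At a 0/1 vector of Hamming weight `w`, the elementary symmetric polynomial `e_m` takes the value
`C(w, m)`, so `∑_{m < N} (-1)^m e_m` takes the value `∑_{m < N} (-1)^m C(w, m)`, which is `[w = 0]`
whenever `w < N` (it is the expansion of `(1 - 1)^w`). For `N = p^ℓ`, Lucas' theorem gives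
`C(w, m) ≡ C(w mod p^ℓ, m) (mod p)` for all `m < p^ℓ`, so modulo `p` the value is `[p^ℓ ∣ w]`.
Each `e_m` is multilinear and homogeneous of degree `m ≤ p^ℓ - 1`.
-/

open MvPolynomial Finset

theorem natCast_choose_eq_choose_mod_prime_pow (p : ℕ) [Fact p.Prime] (ℓ : ℕ) {m : ℕ}
    (hm : m < p ^ ℓ) (n : ℕ) : (n.choose m : ZMod p) = ((n % p ^ ℓ).choose m : ZMod p) := by
  induction ℓ generalizing m n with
  | zero => simp_all
  | succ ℓ ih =>
    have lucas (a b : ℕ) :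
        (a.choose b : ZMod p) = (a % p).choose (b % p) * (a / p).choose (b / p) := by
      exact_mod_cast (ZMod.natCast_eq_natCast_iff _ _ _).mpr
        (Choose.choose_modEq_choose_mod_mul_choose_div_nat (p := p) (n := a) (k := b))
    have hmod : n % p ^ (ℓ + 1) % p = n % p :=
      Nat.mod_mod_of_dvd _ (dvd_pow_self p ℓ.succ_ne_zero)
    have hdiv : n % p ^ (ℓ + 1) / p = n / p % p ^ ℓ := by
      rw [pow_succ', Nat.mod_mul_right_div_self]
    rw [lucas n m, lucas (n % p ^ (ℓ + 1)) m, hmod, hdiv,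
      ih (Nat.div_lt_of_lt_mul (by rwa [← pow_succ']))]

theorem sum_range_neg_one_pow_mul_choose {R : Type*} [CommRing R] {r N : ℕ} (hr : r < N) :
    ∑ m ∈ range N, (-1) ^ m * (r.choose m : R) = if r = 0 then 1 else 0 := by
  obtain ⟨d, rfl⟩ := Nat.exists_eq_add_of_le (Nat.succ_le_of_lt hr)
  have hvanish : ∑ m ∈ range d, (-1) ^ (r + 1 + m) * ((r.choose (r + 1 + m) : ℕ) : R) = 0 :=
    sum_eq_zero fun m _ => by rw [Nat.choose_eq_zero_of_lt (by omega), Nat.cast_zero, mul_zero]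
  rw [sum_range_add, hvanish, add_zero]
  exact_mod_cast congrArg (Int.cast : ℤ → R) Int.alternating_sum_range_choose

section Esymm

variable {σ R : Type*} [CommSemiring R] [Fintype σ]

theorem isHomogeneous_esymm (n : ℕ) : (esymm σ R n).IsHomogeneous n := by
  refine IsHomogeneous.sum _ _ _ fun t ht => ?_
  simpa [(mem_powersetCard.1 ht).2] using IsHomogeneous.prod t _ _ fun i _ => isHomogeneous_X R i

theorem degreeOf_esymm_le_one (n : ℕ) (i : σ) : (esymm σ R n).degreeOf i ≤ 1 := by
  classical
  rcases subsingleton_or_nontrivial R with hR | hR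
  · simp [Subsingleton.elim (esymm σ R n) 0]
  rw [degreeOf_le_iff, support_esymm]
  simp only [mem_image, forall_exists_index, and_imp]
  rintro _ t _ rfl
  simpa [Finsupp.finsetSum_apply, Finsupp.single_apply] using ite_le_one le_rfl zero_le_one

theorem eval_indicator_esymm [DecidableEq σ] (s : Finset σ) (n : ℕ) :
    eval (fun i => if i ∈ s then 1 else 0) (esymm σ R n) = s.card.choose n := by
  have hsubsets : (powersetCard n univ).filter (· ⊆ s) = powersetCard n s := by
    ext t
    simp [mem_powersetCard, and_comm]
  simp only [esymm, map_sum, map_prod, eval_X, prod_boole, ← subset_iff, sum_boole, hsubsets,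
    card_powersetCard]

end Esymm

section AltEsymmSum

variable (σ R : Type*) [CommRing R] [Fintype σ]

noncomputable def altEsymmSum (N : ℕ) : MvPolynomial σ R :=
  ∑ m ∈ range N, C ((-1) ^ m) * esymm σ R m

variable {σ R}

theorem degreeOf_altEsymmSum_le_one (N : ℕ) (i : σ) : (altEsymmSum σ R N).degreeOf i ≤ 1 :=
  (degreeOf_sum_le _ _ _).trans <| Finset.sup_le fun m _ =>
    (degreeOf_C_mul_le _ _ _).trans (degreeOf_esymm_le_one m i)

theorem totalDegree_altEsymmSum_le (N : ℕ) : (altEsymmSum σ R N).totalDegree ≤ N - 1 :=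
  totalDegree_finsetSum_le fun m hm =>
    ((isHomogeneous_esymm m).C_mul _).totalDegree_le.trans (by simp at hm; omega)

theorem eval_indicator_altEsymmSum [DecidableEq σ] (N : ℕ) (s : Finset σ) :
    eval (fun i => if i ∈ s then 1 else 0) (altEsymmSum σ R N) =
      ∑ m ∈ range N, (-1) ^ m * (s.card.choose m : R) := by
  simp only [altEsymmSum, map_sum, map_mul, eval_C, eval_indicator_esymm]

theorem eval_indicator_altEsymmSum_prime_pow {p : ℕ} [Fact p.Prime] (ℓ : ℕ) [DecidableEq σ]
    (s : Finset σ) :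
    eval (fun i => if i ∈ s then 1 else 0) (altEsymmSum σ (ZMod p) (p ^ ℓ)) =
      if p ^ ℓ ∣ s.card then 1 else 0 := by
  have hpos : 0 < p ^ ℓ := pow_pos (Fact.out : p.Prime).pos ℓ
  simp_rw [eval_indicator_altEsymmSum, Nat.dvd_iff_mod_eq_zero,
    ← sum_range_neg_one_pow_mul_choose (Nat.mod_lt _ hpos)]
  exact sum_congr rfl fun m hm => by
    rw [natCast_choose_eq_choose_mod_prime_pow p ℓ (mem_range.1 hm)]

end AltEsymmSum

theorem barrington_beigel_rudich_general (p k ℓ : ℕ) (hp : p.Prime) :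
    ∃ f : MvPolynomial (Fin k) (ZMod p),
      (∀ i : Fin k, f.degreeOf i ≤ 1) ∧
      f.totalDegree ≤ p ^ ℓ - 1 ∧
      ∀ c : Fin k → Bool,
        MvPolynomial.eval (fun i => if c i then (1 : ZMod p) else 0) f =
          if p ^ ℓ ∣ (Finset.univ.filter fun i => c i = true).card then 1 else 0 := by
  have : Fact p.Prime := ⟨hp⟩
  refine ⟨altEsymmSum (Fin k) (ZMod p) (p ^ ℓ), degreeOf_altEsymmSum_le_one _,
    totalDegree_altEsymmSum_le _, fun c => ?_⟩
  simpa using eval_indicator_altEsymmSum_prime_pow ℓ (univ.filter fun i => c i = true)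

/-- Barrington–Beigel–Rudich low-degree multilinear polynomial over ℤ_p
detecting divisibility of the Hamming weight by p^ℓ. -/
theorem barrington_beigel_rudich (p k ℓ : ℕ) (hp : p.Prime) (hk : p ^ ℓ < k) :
    ∃ f : MvPolynomial (Fin k) (ZMod p),
      (∀ i : Fin k, f.degreeOf i ≤ 1) ∧
      f.totalDegree ≤ p ^ ℓ - 1 ∧
      ∀ c : Fin k → Bool,
        MvPolynomial.eval (fun i => if c i then (1 : ZMod p) else 0) f =
          if p ^ ℓ ∣ (Finset.univ.filter fun i => c i = true).card then 1 else 0 :=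
  barrington_beigel_rudich_general p k ℓ hp
end

section
/- Let p be an odd prime, ℓ a positive integer, and k = 4p^ℓ − 1. Then for every positive integer m, the independence number of the m-fold strong power of the quarter-orthogonality graph satisfies α(H_k^{⊠m}) ≤ (C(k,0) + C(k,1) + ⋯ + C(k, p^ℓ − 1))^m, where C(k,i) denotes the binomial coefficient. -/
/-!
Let `q = p ^ ℓ`. For an independent set `S` of `H_k^{⊠m}` attach to each `u ∈ S` the function
`f_u y = ∏ j, B (d(y j, u j))` over `𝔽_p`, where `B n = ∏_{t<ℓ} (1 - C(n, p^t)^(p-1))` equals `1`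
if `q ∣ n` and `0` otherwise (Barrington–Beigel–Rudich, via Lucas' theorem). Distinct
non-adjacent vertices of `H_k` are at a distance that is even, nonzero, `< 4q` and `≠ 2q`, hence
not divisible by `q`; so `f_u w = [u = w]` on `S` and the `f_u` are linearly independent. Each
factor of `f_u` is a polynomial of degree `q - 1` in the coordinates of `y j`, so all `f_u` lie in
the span of the `(∑_{i<q} C(k, i))^m` products of multilinear monomials of degree `< q`.
-/

/-- Vertices of the quarter-orthogonality graph: even Hamming weight binary strings. -/
def QVertex (k : ℕ) := {u : Fin k → ZMod 2 // Even (hammingNorm u)}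

/-- The quarter-orthogonality graph `H_k`: even-weight binary strings of length k,
adjacent iff their Hamming distance is (k+1)/2. -/
def Hgraph (k : ℕ) : SimpleGraph (QVertex k) where
  Adj x y := x ≠ y ∧ hammingDist x.1 y.1 = (k + 1) / 2
  symm := ⟨fun x y => by
    rintro ⟨h1, h2⟩
    exact ⟨h1.symm, by rwa [hammingDist_comm]⟩⟩
  loopless := ⟨fun x => by simp⟩

/-- The m-fold strong power of a simple graph. -/
def SimpleGraph.strongPow {α : Type*} (m : ℕ) (G : SimpleGraph α) :
    SimpleGraph (Fin m → α) where
  Adj x y := x ≠ y ∧ ∀ i, x i = y i ∨ G.Adj (x i) (y i)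
  symm := ⟨fun x y => by
    rintro ⟨h1, h2⟩
    exact ⟨h1.symm, fun i => (h2 i).imp Eq.symm (fun h => G.adj_symm h)⟩⟩
  loopless := ⟨fun x => by simp⟩

open Finset

section LowDegree

variable (R : Type*) [CommRing R] {σ : Type*}

/-- The monomial `∏ i ∈ s, x i` on the cube `(ZMod 2)^σ`. Since `x i ^ 2 = x i` there, these span
all polynomial functions, and `lowDegree R σ d` is the space of those of degree at most `d`. -/
def cubeMonomial (s : Finset σ) (x : σ → ZMod 2) : R := if ∀ i ∈ s, x i = 1 then 1 else 0

def lowDegree (σ : Type*) (d : ℕ) : Submodule R ((σ → ZMod 2) → R) :=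
  Submodule.span R (Set.range fun s : {s : Finset σ // #s ≤ d} => cubeMonomial R s.1)

variable {R}

lemma cubeMonomial_mem_lowDegree {s : Finset σ} {d : ℕ} (h : #s ≤ d) :
    cubeMonomial R s ∈ lowDegree R σ d :=
  Submodule.subset_span ⟨⟨s, h⟩, rfl⟩

lemma one_mem_lowDegree (d : ℕ) : (1 : (σ → ZMod 2) → R) ∈ lowDegree R σ d := by
  convert cubeMonomial_mem_lowDegree (R := R) (s := (∅ : Finset σ)) (Nat.zero_le d)
  ext x
  simp [cubeMonomial]

lemma cubeMonomial_mul [DecidableEq σ] (s t : Finset σ) :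
    cubeMonomial R s * cubeMonomial R t = cubeMonomial R (s ∪ t) := by
  ext x
  simp only [cubeMonomial, Pi.mul_apply, ite_zero_mul_ite_zero, mul_one, forall_mem_union]

lemma lowDegree_mul_le (d e : ℕ) :
    lowDegree R σ d * lowDegree R σ e ≤ lowDegree R σ (d + e) := by
  classical
  rw [lowDegree, lowDegree, Submodule.span_mul_span, Submodule.span_le]
  rintro _ ⟨_, ⟨s, rfl⟩, _, ⟨t, rfl⟩, rfl⟩
  simp only [SetLike.mem_coe, cubeMonomial_mul]
  exact cubeMonomial_mem_lowDegree ((card_union_le _ _).trans (add_le_add s.2 t.2))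

lemma mul_mem_lowDegree {f g : (σ → ZMod 2) → R} {d e : ℕ} (hf : f ∈ lowDegree R σ d)
    (hg : g ∈ lowDegree R σ e) : f * g ∈ lowDegree R σ (d + e) :=
  lowDegree_mul_le d e (Submodule.mul_mem_mul hf hg)

lemma pow_mem_lowDegree {f : (σ → ZMod 2) → R} {d : ℕ} (hf : f ∈ lowDegree R σ d) (n : ℕ) :
    f ^ n ∈ lowDegree R σ (n * d) := by
  induction n with
  | zero => simpa using one_mem_lowDegree 0
  | succ n ih => simpa [pow_succ, add_mul] using mul_mem_lowDegree ih hf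

lemma prod_mem_lowDegree {ι : Type*} (A : Finset ι) {f : ι → (σ → ZMod 2) → R} {d : ι → ℕ}
    (h : ∀ i ∈ A, f i ∈ lowDegree R σ (d i)) :
    ∏ i ∈ A, f i ∈ lowDegree R σ (∑ i ∈ A, d i) := by
  classical
  induction A using Finset.induction with
  | empty => simpa using one_mem_lowDegree 0
  | insert i A hiA ih =>
    rw [prod_insert hiA, sum_insert hiA]
    exact mul_mem_lowDegree (h i (mem_insert_self i A))
      (ih fun j hj => h j (mem_insert_of_mem hj))

lemma ite_ne_mem_lowDegree (i : σ) (a : ZMod 2) :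
    (fun x : σ → ZMod 2 => if x i ≠ a then (1 : R) else 0) ∈ lowDegree R σ 1 := by
  have hi : cubeMonomial R {i} ∈ lowDegree R σ 1 := cubeMonomial_mem_lowDegree (by simp)
  have two : ∀ b : ZMod 2, b = 0 ∨ b = 1 := by decide
  have h10 : (1 : ZMod 2) ≠ 0 := by decide
  rcases two a with rfl | rfl
  · convert hi using 2 with x
    rcases two (x i) with h | h <;> simp [cubeMonomial, h, h10]
  · convert Submodule.sub_mem _ (one_mem_lowDegree 1) hi using 2 with x
    rcases two (x i) with h | h <;> simp [cubeMonomial, h, h10.symm]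

lemma cast_choose_card_eq_sum_prod [Fintype σ] [DecidableEq σ] (T : Finset σ) (r : ℕ) :
    ((#T).choose r : R) = ∑ A ∈ powersetCard r univ, ∏ i ∈ A, if i ∈ T then 1 else 0 := by
  have hA (A : Finset σ) : (∏ i ∈ A, if i ∈ T then 1 else 0 : R) = if A ⊆ T then 1 else 0 := by
    simp [prod_boole, subset_iff]
  rw [sum_congr rfl fun A _ => hA A, sum_boole, ← card_powersetCard]
  congr 2
  ext A
  simp [mem_powersetCard, and_comm]

lemma choose_hammingDist_mem_lowDegree [Fintype σ] (u : σ → ZMod 2) (r : ℕ) :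
    (fun x => ((hammingDist x u).choose r : R)) ∈ lowDegree R σ r := by
  classical
  have hsum : (fun x => ((hammingDist x u).choose r : R)) =
      ∑ A ∈ powersetCard r univ, ∏ i ∈ A, fun x : σ → ZMod 2 => if x i ≠ u i then 1 else 0 := by
    ext x
    simp [hammingDist, cast_choose_card_eq_sum_prod, Finset.sum_apply, Finset.prod_apply]
  rw [hsum]
  refine Submodule.sum_mem _ fun A hA => ?_
  convert prod_mem_lowDegree A fun i _ => ite_ne_mem_lowDegree (R := R) i (u i)
  simp [(mem_powersetCard.1 hA).2]

end LowDegree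

/-- The Barrington–Beigel–Rudich polynomial. By Lucas' theorem `C(n, p^t)` is the `t`-th base-`p`
digit of `n` modulo `p`, so the product detects whether the last `ℓ` digits of `n` vanish. -/
def bbrPoly (p ℓ n : ℕ) : ZMod p := ∏ t ∈ range ℓ, (1 - (n.choose (p ^ t) : ZMod p) ^ (p - 1))

section BBR

variable {p : ℕ} [Fact p.Prime]

lemma cast_choose_prime_pow (n t : ℕ) : (n.choose (p ^ t) : ZMod p) = (n / p ^ t : ℕ) := by
  induction t generalizing n with
  | zero => simp
  | succ t ih =>
    have lucas := (ZMod.natCast_eq_natCast_iff _ _ p).2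
      (Choose.choose_modEq_choose_mod_mul_choose_div_nat (p := p) (n := n) (k := p ^ (t + 1)))
    rw [lucas, pow_succ, Nat.mul_mod_left, Nat.mul_div_cancel _ (Fact.out : p.Prime).pos,
      Nat.choose_zero_right, one_mul, ih, Nat.div_div_eq_div_mul, mul_comm]

lemma bbrPoly_eq_ite (ℓ n : ℕ) : bbrPoly p ℓ n = if p ^ ℓ ∣ n then 1 else 0 := by
  have hp := (Fact.out : p.Prime)
  split_ifs with h
  · refine prod_eq_one fun t ht => ?_
    have hdvd : p ∣ n / p ^ t := Nat.dvd_div_of_mul_dvd <|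
      (pow_succ p t ▸ pow_dvd_pow p (mem_range.1 ht)).trans h
    rw [cast_choose_prime_pow, (ZMod.natCast_eq_zero_iff _ _).2 hdvd,
      zero_pow (Nat.sub_ne_zero_of_lt hp.one_lt), sub_zero]
  · have hn : n ≠ 0 := by rintro rfl; exact h (dvd_zero _)
    have hval : padicValNat p n < ℓ := by
      by_contra! hle
      exact h ((padicValNat_dvd_iff_le hn).2 hle)
    refine prod_eq_zero (mem_range.2 hval) ?_
    have hdigit : (n / p ^ padicValNat p n : ℕ) ≠ (0 : ZMod p) := by
      rw [Ne, ZMod.natCast_eq_zero_iff]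
      exact fun hdvd =>
        pow_succ_padicValNat_not_dvd hn (Nat.mul_dvd_of_dvd_div pow_padicValNat_dvd hdvd)
    rw [cast_choose_prime_pow, ZMod.pow_card_sub_one_eq_one hdigit, sub_self]

lemma bbrPoly_hammingDist_mem_lowDegree {σ : Type*} [Fintype σ] (ℓ : ℕ) (u : σ → ZMod 2) :
    (fun x => bbrPoly p ℓ (hammingDist x u)) ∈ lowDegree (ZMod p) σ (p ^ ℓ - 1) := by
  have hdeg : ∑ t ∈ range ℓ, (p - 1) * p ^ t = p ^ ℓ - 1 := by
    rw [← mul_sum, mul_comm, geom_sum_mul_of_one_le (Fact.out : p.Prime).one_lt.le]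
  rw [← hdeg]
  convert prod_mem_lowDegree (range ℓ) fun t _ => Submodule.sub_mem _ (one_mem_lowDegree _)
    (pow_mem_lowDegree (choose_hammingDist_mem_lowDegree (R := ZMod p) u (p ^ t)) (p - 1)) using 1
  ext x
  simp [bbrPoly, Finset.prod_apply]

end BBR

theorem prod_mem_span_range_pi {R X ι κ : Type*} [CommSemiring R] [Fintype ι] [Fintype κ]
    [DecidableEq κ] {b : ι → X → R} {f : κ → X → R}
    (hf : ∀ j, f j ∈ Submodule.span R (Set.range b)) :
    (fun y : κ → X => ∏ j, f j (y j)) ∈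
      Submodule.span R (Set.range fun T : κ → ι => fun y : κ → X => ∏ j, b (T j) (y j)) := by
  choose c hc using fun j => (Submodule.mem_span_range_iff_exists_fun R).1 (hf j)
  refine (Submodule.mem_span_range_iff_exists_fun R).2 ⟨fun T => ∏ j, c j (T j), ?_⟩
  ext y
  simp only [← hc, Finset.sum_apply, Pi.smul_apply, smul_eq_mul, Fintype.prod_sum,
    prod_mul_distrib]

/-- Alon's linear-algebra bound: functions vanishing off the diagonal are linearly independent. -/
theorem card_le_card_of_mem_span_of_eval {K Y ι κ : Type*} [Field K] [Fintype ι] [Fintype κ]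
    {b : κ → Y → K} {f : ι → Y → K} (x : ι → Y)
    (hf : ∀ i, f i ∈ Submodule.span K (Set.range b))
    (hdiag : ∀ i, f i (x i) ≠ 0) (hoff : ∀ i j, i ≠ j → f i (x j) = 0) :
    Fintype.card ι ≤ Fintype.card κ := by
  classical
  have hli : LinearIndependent K f := by
    refine Fintype.linearIndependent_iff.2 fun c hc i => ?_
    have hci := congrFun hc (x i)
    simp only [Finset.sum_apply, Pi.smul_apply, smul_eq_mul, Pi.zero_apply] at hci
    rw [Finset.sum_eq_single i (fun j _ hji => by rw [hoff j i hji, mul_zero]) (by simp)] at hci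
    exact (mul_eq_zero.1 hci).resolve_right (hdiag i)
  have := FiniteDimensional.span_of_finite K (Set.finite_range b)
  let f' : ι → Submodule.span K (Set.range b) := fun i => ⟨f i, hf i⟩
  have hli' : LinearIndependent K f' := LinearIndependent.of_comp (Submodule.subtype _) hli
  exact hli'.fintype_card_le_finrank.trans (finrank_range_le_card b)

theorem card_finset_card_le_eq_sum_choose {σ : Type*} [Fintype σ] (d : ℕ) :
    Fintype.card {s : Finset σ // #s ≤ d} = ∑ i ∈ range (d + 1), (Fintype.card σ).choose i := by
  classical
  rw [Fintype.card_subtype, card_eq_sum_card_fiberwise (f := card) (t := range (d + 1))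
    fun s hs => mem_range.2 (Nat.lt_succ_of_le (mem_filter.1 hs).2)]
  refine sum_congr rfl fun i hi => ?_
  rw [← card_univ, ← card_powersetCard]
  congr 1
  ext s
  simp only [mem_filter, mem_univ, true_and, mem_powersetCard, subset_univ]
  constructor
  · exact And.right
  · rintro rfl
    exact ⟨Nat.lt_succ_iff.1 (mem_range.1 hi), rfl⟩

theorem SimpleGraph.compl_strongPow_adj_iff {α : Type*} {G : SimpleGraph α} {m : ℕ}
    {u w : Fin m → α} : (G.strongPow m)ᶜ.Adj u w ↔ ∃ j, Gᶜ.Adj (u j) (w j) := by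
  simp only [compl_adj, strongPow, ne_eq, not_and, not_forall, not_or]
  constructor
  · rintro ⟨hne, h⟩
    exact h hne
  · rintro ⟨j, hj, hadj⟩
    exact ⟨fun h => hj (congrFun h j), fun _ => ⟨j, hj, hadj⟩⟩

lemma cast_hammingNorm_zmod_two {σ : Type*} [Fintype σ] (x : σ → ZMod 2) :
    ((hammingNorm x : ℕ) : ZMod 2) = ∑ i, x i := by
  have two : ∀ b : ZMod 2, b = if b ≠ 0 then 1 else 0 := by decide
  rw [hammingNorm, ← sum_boole (R := ZMod 2)]
  exact sum_congr rfl fun i _ => (two (x i)).symm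

lemma even_hammingDist {σ : Type*} [Fintype σ] {x y : σ → ZMod 2} (hx : Even (hammingNorm x))
    (hy : Even (hammingNorm y)) : Even (hammingDist x y) := by
  rw [← ZMod.natCast_eq_zero_iff_even, cast_hammingNorm_zmod_two] at hx hy
  rw [← ZMod.natCast_eq_zero_iff_even]
  rw [hammingDist_eq_hammingNorm, cast_hammingNorm_zmod_two]
  simp [sum_add_distrib, hx, hy]

theorem not_dvd_hammingDist_of_Hgraph_compl_adj {q : ℕ} (hq : Odd q)
    {u w : QVertex (4 * q - 1)} (h : (Hgraph (4 * q - 1))ᶜ.Adj u w) :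
    ¬ q ∣ hammingDist u.1 w.1 := by
  obtain ⟨hne, hnadj⟩ := (SimpleGraph.compl_adj _ _ _).1 h
  have hpos : hammingDist u.1 w.1 ≠ 0 := fun h0 => hne (Subtype.ext (hammingDist_eq_zero.1 h0))
  have hle : hammingDist u.1 w.1 ≤ 4 * q - 1 := by
    simpa using hammingDist_le_card_fintype (x := u.1) (y := w.1)
  have heven := even_hammingDist u.2 w.2
  have hhalf : hammingDist u.1 w.1 ≠ 2 * q := fun h2 => hnadj ⟨hne, by rw [h2]; omega⟩
  rintro ⟨c, hc⟩
  rw [hc] at hpos hle heven hhalf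
  have hc4 : c < 4 := by
    by_contra! h4
    have := Nat.mul_le_mul_left q h4
    omega
  have hq' : ¬Even q := Nat.not_even_iff_odd.2 hq
  interval_cases c
  · exact hpos (mul_zero q)
  · exact hq' (by simpa using heven)
  · exact hhalf (mul_comm q 2)
  · exact hq' ((Nat.even_mul.1 heven).resolve_right (by decide))

instance (k : ℕ) : Fintype (QVertex k) :=
  inferInstanceAs (Fintype {u : Fin k → ZMod 2 // Even (hammingNorm u)})

theorem card_le_of_isIndepSet_strongPow_Hgraph {p : ℕ} [Fact p.Prime] (hodd : Odd p) (ℓ m : ℕ)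
    {s : Finset (Fin m → QVertex (4 * p ^ ℓ - 1))}
    (hs : ((Hgraph (4 * p ^ ℓ - 1)).strongPow m).IsIndepSet s) :
    #s ≤ (∑ i ∈ range (p ^ ℓ), (4 * p ^ ℓ - 1).choose i) ^ m := by
  let f (u : s) (y : Fin m → Fin (4 * p ^ ℓ - 1) → ZMod 2) : ZMod p :=
    ∏ j, bbrPoly p ℓ (hammingDist (y j) (u.1 j).1)
  let b (t : {t : Finset (Fin (4 * p ^ ℓ - 1)) // #t ≤ p ^ ℓ - 1}) := cubeMonomial (ZMod p) t.1
  have hmem (u : s) :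
      f u ∈ Submodule.span (ZMod p) (Set.range fun (T : Fin m → _) y => ∏ j, b (T j) (y j)) :=
    prod_mem_span_range_pi fun j => bbrPoly_hammingDist_mem_lowDegree ℓ (u.1 j).1
  have hdiag (u : s) : f u (fun j => (u.1 j).1) ≠ 0 := by simp [f, bbrPoly_eq_ite]
  have hoff (u w : s) (huw : u ≠ w) : f u (fun j => (w.1 j).1) = 0 := by
    have hne : w.1 ≠ u.1 := Subtype.coe_ne_coe.2 huw.symm
    obtain ⟨j, hj⟩ := SimpleGraph.compl_strongPow_adj_iff.1 <|
      (SimpleGraph.compl_adj _ _ _).2 ⟨hne, hs w.2 u.2 hne⟩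
    exact prod_eq_zero (mem_univ j) <| by
      rw [bbrPoly_eq_ite, if_neg (not_dvd_hammingDist_of_Hgraph_compl_adj hodd.pow hj)]
  have hq : p ^ ℓ - 1 + 1 = p ^ ℓ :=
    Nat.sub_add_cancel (Nat.one_le_pow _ _ (Fact.out : p.Prime).pos)
  simpa [Fintype.card_pi, card_finset_card_le_eq_sum_choose, hq] using
    card_le_card_of_mem_span_of_eval _ hmem hdiag hoff

theorem indepNum_strongPow_Hgraph_le_general (p ℓ m k : ℕ) (hp : p.Prime) (hodd : Odd p)
    (hk : k = 4 * p ^ ℓ - 1) :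
    ((Hgraph k).strongPow m).indepNum' ≤ (∑ i ∈ Finset.range (p ^ ℓ), k.choose i) ^ m := by
  have := Fact.mk hp
  subst hk
  obtain ⟨s, hs⟩ := ((Hgraph _).strongPow m).exists_isNIndepSet_indepNum
  rw [SimpleGraph.indepNum', SimpleGraph.cliqueNum_compl, ← hs.card_eq]
  exact card_le_of_isIndepSet_strongPow_Hgraph hodd ℓ m hs.isIndepSet

/-- for k = 4p^ℓ - 1 with p an odd prime,
α(H_k^{⊠m}) ≤ (C(k,0) + ⋯ + C(k, p^ℓ - 1))^m. -/
theorem indepNum_strongPow_Hgraph_le (p ℓ m k : ℕ) (hp : p.Prime) (hodd : Odd p)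
    (hℓ : 0 < ℓ) (hm : 0 < m) (hk : k = 4 * p ^ ℓ - 1) :
    ((Hgraph k).strongPow m).indepNum' ≤ (∑ i ∈ Finset.range (p ^ ℓ), k.choose i) ^ m :=
  indepNum_strongPow_Hgraph_le_general p ℓ m k hp hodd hk
end
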